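/- Let N, A, C and N', A', C' be two non-collinear triples of points in EuclideanSpace ℝ (Fin 3) with ‖N' - N‖ ≤ ε, ‖A' - A‖ ≤ ε, ‖C' - C‖ ≤ ε. Let l_{N,A} > 0 be a lower bound for both ‖N - A‖ and ‖N' - A'‖, let L_{A,C} be an upper bound for both ‖C - A‖ and ‖C' - A'‖, and let h₀ > 0 be a lower bound for both ‖h‖ and ‖h'‖. Set K = 1/l_{N,A} + (2/h₀)·(1 + 2·L_{A,C}/l_{N,A}). Then ‖w' - w‖ ≤ 4εK. -/

import Mathlib

open scoped RealInnerProductSpace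

noncomputable section

/-- The standard cross product on `EuclideanSpace ℝ (Fin 3)`. -/
def cross3 (u v : EuclideanSpace ℝ (Fin 3)) : EuclideanSpace ℝ (Fin 3) :=
  (EuclideanSpace.equiv (Fin 3) ℝ).symm
    (crossProduct (EuclideanSpace.equiv (Fin 3) ℝ u) (EuclideanSpace.equiv (Fin 3) ℝ v))

/-- The first basis vector `u = (N - A)/‖N - A‖` of a residual triple. -/
def uT (N A : EuclideanSpace ℝ (Fin 3)) : EuclideanSpace ℝ (Fin 3) :=
  ‖N - A‖⁻¹ • (N - A)

/-- The Gram–Schmidt coefficient `b = ⟪C - A, N - A⟫/‖N - A‖²`. -/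
def bT (N A C : EuclideanSpace ℝ (Fin 3)) : ℝ :=
  ⟪C - A, N - A⟫ / ‖N - A‖ ^ 2

/-- The height vector `h = (C - A) - b • (N - A)`. -/
def hT (N A C : EuclideanSpace ℝ (Fin 3)) : EuclideanSpace ℝ (Fin 3) :=
  (C - A) - bT N A C • (N - A)

/-- The second basis vector `v = h/‖h‖`. -/
def vT (N A C : EuclideanSpace ℝ (Fin 3)) : EuclideanSpace ℝ (Fin 3) :=
  ‖hT N A C‖⁻¹ • hT N A C

/-- The third basis vector `w = u ×₃ v`. -/
def wT (N A C : EuclideanSpace ℝ (Fin 3)) : EuclideanSpace ℝ (Fin 3) :=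
  cross3 (uT N A) (vT N A C)

end

section Aux

lemma euc_norm_sq3 (x : EuclideanSpace ℝ (Fin 3)) : ‖x‖^2 = x 0^2 + x 1^2 + x 2^2 := by
  rw [← real_inner_self_eq_norm_sq, PiLp.inner_apply]
  simp [Fin.sum_univ_three]

lemma cross3_apply' (a b : EuclideanSpace ℝ (Fin 3)) :
    (cross3 a b 0 = a 1 * b 2 - a 2 * b 1) ∧ (cross3 a b 1 = a 2 * b 0 - a 0 * b 2) ∧
    (cross3 a b 2 = a 0 * b 1 - a 1 * b 0) := by
  refine ⟨?_, ?_, ?_⟩ <;> simp [cross3, cross_apply]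

lemma norm_cross3_le (a b : EuclideanSpace ℝ (Fin 3)) : ‖cross3 a b‖ ≤ ‖a‖ * ‖b‖ := by
  obtain ⟨h0, h1, h2⟩ := cross3_apply' a b
  have hsq : ‖cross3 a b‖^2 ≤ (‖a‖ * ‖b‖)^2 := by
    rw [euc_norm_sq3, h0, h1, h2, mul_pow, euc_norm_sq3 a, euc_norm_sq3 b]
    nlinarith [sq_nonneg (a 0 * b 0 + a 1 * b 1 + a 2 * b 2)]
  nlinarith [norm_nonneg (cross3 a b), mul_nonneg (norm_nonneg a) (norm_nonneg b)]

lemma cross3_sub_left (a b c : EuclideanSpace ℝ (Fin 3)) :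
    cross3 (a - b) c = cross3 a c - cross3 b c := by
  simp [cross3, map_sub, LinearMap.sub_apply]

lemma cross3_sub_right (a b c : EuclideanSpace ℝ (Fin 3)) :
    cross3 a (b - c) = cross3 a b - cross3 a c := by
  simp [cross3, map_sub]

lemma norm_normalize_sub {E : Type*} [NormedAddCommGroup E] [InnerProductSpace ℝ E]
    (x y : E) (l : ℝ) (hl : 0 < l) (hx : l ≤ ‖x‖) (hy : l ≤ ‖y‖) :
    ‖‖x‖⁻¹ • x - ‖y‖⁻¹ • y‖ ≤ 2 * ‖x - y‖ / l := by
  have hx0 : (0:ℝ) < ‖x‖ := lt_of_lt_of_le hl hx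
  have hy0 : (0:ℝ) < ‖y‖ := lt_of_lt_of_le hl hy
  have eq1 : ‖x‖⁻¹ • x - ‖y‖⁻¹ • y = ‖x‖⁻¹ • (x - y) + (‖x‖⁻¹ - ‖y‖⁻¹) • y := by
    rw [smul_sub, sub_smul]; abel
  have habs : |‖y‖ - ‖x‖| ≤ ‖x - y‖ := by
    calc |‖y‖ - ‖x‖| ≤ ‖y - x‖ := abs_norm_sub_norm_le y x
      _ = ‖x - y‖ := norm_sub_rev y x
  calc ‖‖x‖⁻¹ • x - ‖y‖⁻¹ • y‖
      ≤ ‖‖x‖⁻¹ • (x - y)‖ + ‖(‖x‖⁻¹ - ‖y‖⁻¹) • y‖ := by rw [eq1]; exact norm_add_le _ _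
    _ = ‖x - y‖ / ‖x‖ + |‖x‖⁻¹ - ‖y‖⁻¹| * ‖y‖ := by
        rw [norm_smul, norm_smul, Real.norm_eq_abs, Real.norm_eq_abs,
          abs_of_pos (inv_pos.mpr hx0)]
        ring
    _ = ‖x - y‖ / ‖x‖ + |‖y‖ - ‖x‖| / ‖x‖ := by
        rw [show ‖x‖⁻¹ - ‖y‖⁻¹ = (‖y‖ - ‖x‖) / (‖x‖ * ‖y‖) by field_simp,
          abs_div, abs_of_pos (mul_pos hx0 hy0)]
        field_simp
    _ ≤ ‖x - y‖ / ‖x‖ + ‖x - y‖ / ‖x‖ := by gcongr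
    _ ≤ ‖x - y‖ / l + ‖x - y‖ / l := by gcongr
    _ = 2 * ‖x - y‖ / l := by ring

lemma hT_eq (N A C : EuclideanSpace ℝ (Fin 3)) (hNA : N - A ≠ 0) :
    hT N A C = (C - A) - ⟪C - A, uT N A⟫ • uT N A := by
  have hn : ‖N - A‖ ≠ 0 := norm_ne_zero_iff.mpr hNA
  simp only [hT, bT, uT, real_inner_smul_right, smul_smul]
  congr 1
  rw [div_eq_mul_inv, sq, mul_inv]
  ring_nf

lemma norm_uT (N A : EuclideanSpace ℝ (Fin 3)) (hNA : N - A ≠ 0) : ‖uT N A‖ = 1 :=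
  norm_smul_inv_norm hNA

lemma norm_vT (N A C : EuclideanSpace ℝ (Fin 3)) (h : hT N A C ≠ 0) : ‖vT N A C‖ = 1 :=
  norm_smul_inv_norm h

end Aux

/-- **Proposition (perturbation of the third basis vector).**
If `N', A', C'` are `ε`-perturbations of a non-collinear triple `N, A, C`, with
`l_{N,A} > 0` a lower bound for `‖N - A‖, ‖N' - A'‖`, `L_{A,C}` an upper bound
for `‖C - A‖, ‖C' - A'‖`, `h₀ > 0` a lower bound for `‖h‖, ‖h'‖`, and
`K = 1/l_{N,A} + (2/h₀)·(1 + 2·L_{A,C}/l_{N,A})`, then `‖w' - w‖ ≤ 4εK`. -/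
theorem wT_perturbation
    (N A C N' A' C' : EuclideanSpace ℝ (Fin 3))
    (hnc : ¬ Collinear ℝ ({N, A, C} : Set (EuclideanSpace ℝ (Fin 3))))
    (hnc' : ¬ Collinear ℝ ({N', A', C'} : Set (EuclideanSpace ℝ (Fin 3))))
    (ε : ℝ) (hN : ‖N' - N‖ ≤ ε) (hA : ‖A' - A‖ ≤ ε) (hC : ‖C' - C‖ ≤ ε)
    (lNA : ℝ) (hl : 0 < lNA) (hlb : lNA ≤ ‖N - A‖) (hlb' : lNA ≤ ‖N' - A'‖)
    (LAC : ℝ) (hLb : ‖C - A‖ ≤ LAC) (hLb' : ‖C' - A'‖ ≤ LAC)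
    (h₀ : ℝ) (hh : 0 < h₀) (hhb : h₀ ≤ ‖hT N A C‖) (hhb' : h₀ ≤ ‖hT N' A' C'‖)
    (K : ℝ) (hK : K = 1 / lNA + (2 / h₀) * (1 + 2 * LAC / lNA)) :
    ‖wT N' A' C' - wT N A C‖ ≤ 4 * ε * K := by
  clear hnc hnc'
  -- basic positivity facts
  have hε : (0:ℝ) ≤ ε := le_trans (norm_nonneg _) hN
  have hL0 : (0:ℝ) ≤ LAC := le_trans (norm_nonneg _) hLb
  have hNA : N - A ≠ 0 := by
    intro h; rw [h] at hlb; simp at hlb; linarith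
  have hNA' : N' - A' ≠ 0 := by
    intro h; rw [h] at hlb'; simp at hlb'; linarith
  have hH : hT N A C ≠ 0 := by
    intro h; rw [h] at hhb; simp at hhb; linarith
  have hH' : hT N' A' C' ≠ 0 := by
    intro h; rw [h] at hhb'; simp at hhb'; linarith
  have hu1 : ‖uT N A‖ = 1 := norm_uT N A hNA
  have hu1' : ‖uT N' A'‖ = 1 := norm_uT N' A' hNA'
  have hv1' : ‖vT N' A' C'‖ = 1 := norm_vT N' A' C' hH'
  -- perturbation of the differences
  have hdNA : ‖(N' - A') - (N - A)‖ ≤ 2 * ε := by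
    have e : (N' - A') - (N - A) = (N' - N) - (A' - A) := by abel
    calc ‖(N' - A') - (N - A)‖ = ‖(N' - N) - (A' - A)‖ := by rw [e]
      _ ≤ ‖N' - N‖ + ‖A' - A‖ := norm_sub_le _ _
      _ ≤ 2 * ε := by linarith
  have hdCA : ‖(C' - A') - (C - A)‖ ≤ 2 * ε := by
    have e : (C' - A') - (C - A) = (C' - C) - (A' - A) := by abel
    calc ‖(C' - A') - (C - A)‖ = ‖(C' - C) - (A' - A)‖ := by rw [e]
      _ ≤ ‖C' - C‖ + ‖A' - A‖ := norm_sub_le _ _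
      _ ≤ 2 * ε := by linarith
  -- perturbation of u
  have hu : ‖uT N' A' - uT N A‖ ≤ 4 * ε / lNA := by
    calc ‖uT N' A' - uT N A‖ ≤ 2 * ‖(N' - A') - (N - A)‖ / lNA :=
          norm_normalize_sub (N' - A') (N - A) lNA hl hlb' hlb
      _ ≤ 2 * (2 * ε) / lNA := by gcongr
      _ = 4 * ε / lNA := by ring
  -- perturbation of the inner products
  have hinner : |⟪C' - A', uT N' A'⟫ - ⟪C - A, uT N A⟫| ≤ 2 * ε + LAC * (4 * ε / lNA) := by
    have split : ⟪C' - A', uT N' A'⟫ - ⟪C - A, uT N A⟫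
        = ⟪(C' - A') - (C - A), uT N' A'⟫ + ⟪C - A, uT N' A' - uT N A⟫ := by
      simp only [inner_sub_left, inner_sub_right]; ring
    calc |⟪C' - A', uT N' A'⟫ - ⟪C - A, uT N A⟫|
        ≤ |⟪(C' - A') - (C - A), uT N' A'⟫| + |⟪C - A, uT N' A' - uT N A⟫| := by
          rw [split]; exact abs_add_le _ _
      _ ≤ ‖(C' - A') - (C - A)‖ * ‖uT N' A'‖ + ‖C - A‖ * ‖uT N' A' - uT N A‖ := by
          gcongr <;> exact abs_real_inner_le_norm _ _
      _ = ‖(C' - A') - (C - A)‖ + ‖C - A‖ * ‖uT N' A' - uT N A‖ := by rw [hu1', mul_one]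
      _ ≤ 2 * ε + LAC * (4 * ε / lNA) := by gcongr
  -- perturbation of h
  have hhdiff : ‖hT N' A' C' - hT N A C‖ ≤ 4 * ε * (1 + 2 * LAC / lNA) := by
    rw [hT_eq N' A' C' hNA', hT_eq N A C hNA]
    have e : ((C' - A') - ⟪C' - A', uT N' A'⟫ • uT N' A') - ((C - A) - ⟪C - A, uT N A⟫ • uT N A)
        = ((C' - A') - (C - A)) - ((⟪C' - A', uT N' A'⟫ - ⟪C - A, uT N A⟫) • uT N' A'
            + ⟪C - A, uT N A⟫ • (uT N' A' - uT N A)) := by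
      rw [sub_smul, smul_sub]; abel
    rw [e]
    have hCAu : |⟪C - A, uT N A⟫| ≤ LAC := by
      calc |⟪C - A, uT N A⟫| ≤ ‖C - A‖ * ‖uT N A‖ := abs_real_inner_le_norm _ _
        _ = ‖C - A‖ := by rw [hu1, mul_one]
        _ ≤ LAC := hLb
    calc ‖((C' - A') - (C - A)) - ((⟪C' - A', uT N' A'⟫ - ⟪C - A, uT N A⟫) • uT N' A'
            + ⟪C - A, uT N A⟫ • (uT N' A' - uT N A))‖
        ≤ ‖(C' - A') - (C - A)‖ + ‖(⟪C' - A', uT N' A'⟫ - ⟪C - A, uT N A⟫) • uT N' A'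
            + ⟪C - A, uT N A⟫ • (uT N' A' - uT N A)‖ := norm_sub_le _ _
      _ ≤ ‖(C' - A') - (C - A)‖ + (‖(⟪C' - A', uT N' A'⟫ - ⟪C - A, uT N A⟫) • uT N' A'‖
            + ‖⟪C - A, uT N A⟫ • (uT N' A' - uT N A)‖) := by
          gcongr; exact norm_add_le _ _
      _ = ‖(C' - A') - (C - A)‖ + (|⟪C' - A', uT N' A'⟫ - ⟪C - A, uT N A⟫|
            + |⟪C - A, uT N A⟫| * ‖uT N' A' - uT N A‖) := by
          rw [norm_smul, norm_smul, Real.norm_eq_abs, Real.norm_eq_abs, hu1', mul_one]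
      _ ≤ 2 * ε + ((2 * ε + LAC * (4 * ε / lNA)) + LAC * (4 * ε / lNA)) := by gcongr
      _ = 4 * ε * (1 + 2 * LAC / lNA) := by field_simp; ring
  -- perturbation of v
  have hv : ‖vT N' A' C' - vT N A C‖ ≤ 2 * (4 * ε * (1 + 2 * LAC / lNA)) / h₀ := by
    calc ‖vT N' A' C' - vT N A C‖ ≤ 2 * ‖hT N' A' C' - hT N A C‖ / h₀ :=
          norm_normalize_sub (hT N' A' C') (hT N A C) h₀ hh hhb' hhb
      _ ≤ 2 * (4 * ε * (1 + 2 * LAC / lNA)) / h₀ := by gcongr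
  -- assemble
  have ew : wT N' A' C' - wT N A C
      = cross3 (uT N' A' - uT N A) (vT N' A' C') + cross3 (uT N A) (vT N' A' C' - vT N A C) := by
    rw [cross3_sub_left, cross3_sub_right]
    simp only [wT]
    abel
  calc ‖wT N' A' C' - wT N A C‖
      = ‖cross3 (uT N' A' - uT N A) (vT N' A' C')
          + cross3 (uT N A) (vT N' A' C' - vT N A C)‖ := by rw [ew]
    _ ≤ ‖cross3 (uT N' A' - uT N A) (vT N' A' C')‖
          + ‖cross3 (uT N A) (vT N' A' C' - vT N A C)‖ := norm_add_le _ _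
    _ ≤ ‖uT N' A' - uT N A‖ * ‖vT N' A' C'‖ + ‖uT N A‖ * ‖vT N' A' C' - vT N A C‖ := by
        gcongr <;> exact norm_cross3_le _ _
    _ = ‖uT N' A' - uT N A‖ + ‖vT N' A' C' - vT N A C‖ := by rw [hv1', hu1, mul_one, one_mul]
    _ ≤ 4 * ε / lNA + 2 * (4 * ε * (1 + 2 * LAC / lNA)) / h₀ := by gcongr
    _ = 4 * ε * K := by
        rw [hK]
        field_simp
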